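/- arXiv:2506.08062 — 3 statements merged into one kernel-verified Lean document; each statement's English description precedes it below -/
import Mathlib

section
/- Let C be the Bellman-flow feasible set of a finite MDP, let u_i : ℝ → ℝ (i = 1,…,I) be concave and differentiable, let f : ℝ → ℝ be strictly convex and differentiable, let β > 0, and let d_D : S×A → ℝ be positive. Define F(d) = Σ_i u_i(J_i(d)) − β Σ_{s,a} d_D(s,a) f(d(s,a)/d_D(s,a)) and, for weights μ ∈ ℝ^I, G_μ(d) = Σ_i μ_i J_i(d) − β Σ_{s,a} d_D(s,a) f(d(s,a)/d_D(s,a)). If d* maximizes F over C and μ*_i = u_i'(J_i(d*)) for every i, then d* is the unique maximizer of G_{μ*} over C. (Equivalence between regularized fair MORL and regularized linear MORL with the optimal implicit preference weights.) -/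
/-!
Moving from a maximizer `d*` of `F` towards any `d ∈ C` cannot increase `F` to first order.
Along that segment the convex regularizer lies below its chord, so this first-order condition says
that `d*` maximizes over `C` the linearization `Σᵢ uᵢ'(Jᵢ d*) Jᵢ` of the utility part minus the
regularizer, which is `G`. Strict convexity of `f` and positivity of `dD` make `G` strictly
concave, so its maximizer is unique.
-/

open Set

section FirstOrder

variable {E : Type*} [NormedAddCommGroup E] [NormedSpace ℝ E]
  {C : Set E} {Φ R : E → ℝ} {Φ' : E →L[ℝ] ℝ} {x : E}

theorem IsMaxOn.isMaxOn_fderiv_sub (hC : Convex ℝ C) (hR : ConvexOn ℝ C R)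
    (hΦ : HasFDerivAt Φ Φ' x) (hx : x ∈ C) (hmax : IsMaxOn (fun z => Φ z - R z) C x) :
    IsMaxOn (fun z => Φ' z - R z) C x := by
  intro y hy
  change Φ' y - R y ≤ Φ' x - R x
  set g : ℝ → ℝ := fun t => Φ (AffineMap.lineMap x y t) - t * (R y - R x)
  have hg : HasDerivAt g (Φ' (y - x) - (R y - R x)) 0 := by
    have hline := hΦ.comp_hasDerivAt_of_eq 0 AffineMap.hasDerivAt_lineMap
      (AffineMap.lineMap_apply_zero x y).symm
    simpa [g, Function.comp_def] using
      hline.fun_sub ((hasDerivAt_id (0 : ℝ)).mul_const (R y - R x))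
  have hgmax : IsMaxOn g (Icc 0 1) 0 := by
    intro t ht
    have hchord : R (AffineMap.lineMap x y t) ≤ R x + t * (R y - R x) := by
      have := hR.2 hx hy (sub_nonneg.2 ht.2) ht.1 (sub_add_cancel 1 t)
      rw [AffineMap.lineMap_apply_module]
      simp only [smul_eq_mul] at this
      linarith
    have hobj : Φ (AffineMap.lineMap x y t) - R (AffineMap.lineMap x y t) ≤ Φ x - R x :=
      hmax (hC.lineMap_mem hx hy ht)
    change g t ≤ g 0
    simp only [g, AffineMap.lineMap_apply_zero, zero_mul, sub_zero]
    linarith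
  have hsegment : segment ℝ (0 : ℝ) (0 + 1) ⊆ Icc 0 1 := by simp [segment_eq_Icc]
  have hslope := hgmax.localize.hasFDerivWithinAt_nonpos hg.hasFDerivAt.hasFDerivWithinAt
    (mem_posTangentConeAt_of_segment_subset hsegment)
  simp only [ContinuousLinearMap.toSpanSingleton_apply, one_smul, map_sub] at hslope
  linarith

end FirstOrder

theorem StrictConvexOn.const_mul {E : Type*} [AddCommGroup E] [Module ℝ E] {s : Set E}
    {f : E → ℝ} (hf : StrictConvexOn ℝ s f) {c : ℝ} (hc : 0 < c) :
    StrictConvexOn ℝ s fun x => c * f x := by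
  refine ⟨hf.1, fun x hx y hy hxy a b ha hb hab => ?_⟩
  have := hf.2 hx hy hxy ha hb hab
  simp only [smul_eq_mul] at this ⊢
  nlinarith

theorem StrictConvexOn.comp_div_const {f : ℝ → ℝ} (hf : StrictConvexOn ℝ univ f) {c : ℝ}
    (hc : c ≠ 0) : StrictConvexOn ℝ univ fun z => f (z / c) := by
  refine ⟨convex_univ, fun x _ y _ hxy a b ha hb hab => ?_⟩
  have := hf.2 (mem_univ (x / c)) (mem_univ (y / c)) (fun h => hxy (by simpa [hc] using h))
    ha hb hab
  simp only [smul_eq_mul, add_div, mul_div_assoc] at this ⊢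
  exact this

theorem strictConvexOn_univ_sum_apply {ι : Type*} [Fintype ι] {g : ι → ℝ → ℝ}
    (hg : ∀ i, StrictConvexOn ℝ univ (g i)) :
    StrictConvexOn ℝ univ fun x : ι → ℝ => ∑ i, g i (x i) := by
  refine ⟨convex_univ, fun x _ y _ hxy a b ha hb hab => ?_⟩
  obtain ⟨i, hi⟩ := Function.ne_iff.mp hxy
  simp only [Pi.add_apply, Pi.smul_apply, smul_eq_mul, Finset.mul_sum, ← Finset.sum_add_distrib]
  exact Finset.sum_lt_sum (fun j _ => (hg j).convexOn.2 trivial trivial ha.le hb.le hab)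
    ⟨i, Finset.mem_univ i, (hg i).2 trivial trivial hi ha hb hab⟩

def bellmanFlowSet {S A : Type*} [Fintype S] [Fintype A] (T : S → A → S → ℝ) (p0 : S → ℝ)
    (γ : ℝ) : Set (S × A → ℝ) :=
  {d | (∀ sa, 0 ≤ d sa) ∧
    ∀ s, ∑ a, d (s, a) = (1 - γ) * p0 s + γ * ∑ sa : S × A, T sa.1 sa.2 s * d sa}

theorem convex_bellmanFlowSet {S A : Type*} [Fintype S] [Fintype A] (T : S → A → S → ℝ)
    (p0 : S → ℝ) (γ : ℝ) : Convex ℝ (bellmanFlowSet T p0 γ) := by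
  rintro x ⟨hx0, hx⟩ y ⟨hy0, hy⟩ a b ha hb hab
  refine ⟨fun sa => ?_, fun s => ?_⟩
  · simp only [Pi.add_apply, Pi.smul_apply, smul_eq_mul]
    have := hx0 sa; have := hy0 sa
    positivity
  · simp only [Pi.add_apply, Pi.smul_apply, smul_eq_mul, mul_add, Finset.sum_add_distrib,
      mul_left_comm _ a, mul_left_comm _ b, ← Finset.mul_sum, hx s, hy s]
    linear_combination (1 - γ) * p0 s * hab

theorem fairdice_equiv_regularized_linear_general
    {S A : Type*} [Fintype S] [Fintype A]
    (T : S → A → S → ℝ)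
    (p0 : S → ℝ)
    (γ : ℝ)
    (I : ℕ) (u : Fin I → ℝ → ℝ)
    (hud : ∀ i, Differentiable ℝ (u i))
    (f : ℝ → ℝ) (hf : StrictConvexOn ℝ Set.univ f)
    (β : ℝ) (hβ : 0 < β)
    (dD : S × A → ℝ) (hdD : ∀ sa, 0 < dD sa)
    (r : Fin I → S × A → ℝ)
    (J : Fin I → (S × A → ℝ) → ℝ)
    (hJ : ∀ i d, J i d = ∑ sa : S × A, d sa * r i sa)
    (C : Set (S × A → ℝ))
    (hC : C = {d | (∀ sa, 0 ≤ d sa) ∧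
      ∀ s, ∑ a, d (s, a) =
        (1 - γ) * p0 s + γ * ∑ sa : S × A, T sa.1 sa.2 s * d sa})
    (F : (S × A → ℝ) → ℝ)
    (hF : ∀ d, F d = (∑ i, u i (J i d)) - β * ∑ sa : S × A, dD sa * f (d sa / dD sa))
    (dstar : S × A → ℝ) (hdstarC : dstar ∈ C)
    (hdstarMax : ∀ d ∈ C, F d ≤ F dstar)
    (μ : Fin I → ℝ) (hμ : ∀ i, μ i = deriv (u i) (J i dstar))
    (G : (S × A → ℝ) → ℝ)
    (hG : ∀ d, G d = (∑ i, μ i * J i d) - β * ∑ sa : S × A, dD sa * f (d sa / dD sa)) :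
    (∀ d ∈ C, G d ≤ G dstar) ∧
    (∀ d ∈ C, (∀ d' ∈ C, G d' ≤ G d) → d = dstar) := by
  set Reg : (S × A → ℝ) → ℝ := fun d => ∑ sa, dD sa * f (d sa / dD sa)
  have hCconv : Convex ℝ C := hC ▸ convex_bellmanFlowSet T p0 γ
  have hReg : StrictConvexOn ℝ C (fun d => β * Reg d) :=
    ((strictConvexOn_univ_sum_apply fun sa =>
      (hf.comp_div_const (hdD sa).ne').const_mul (hdD sa)).subset
      (subset_univ C) hCconv).const_mul hβ
  have hJlin : ∀ i, IsLinearMap ℝ (J i) := fun i =>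
    ⟨fun d d' => by simp [hJ, add_mul, Finset.sum_add_distrib],
      fun c d => by simp [hJ, Finset.mul_sum, mul_assoc]⟩
  let L : Fin I → (S × A → ℝ) →L[ℝ] ℝ :=
    fun i => (IsLinearMap.mk' (J i) (hJlin i)).toContinuousLinearMap
  have hΦ : HasFDerivAt (fun d => ∑ i, u i (L i d)) (∑ i, μ i • L i) dstar := by
    simp only [hμ]
    exact HasFDerivAt.fun_sum fun i _ =>
      (hud i (L i dstar)).hasDerivAt.comp_hasFDerivAt dstar (L i).hasFDerivAt
  have hGeq : G = fun d => (∑ i, μ i • L i) d - β * Reg d :=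
    funext fun d => by simp [hG, L, Reg]
  have hmaxG : IsMaxOn G C dstar := hGeq ▸ IsMaxOn.isMaxOn_fderiv_sub hCconv hReg.convexOn hΦ
    hdstarC fun d hd => by
      have := hdstarMax d hd
      rwa [hF, hF] at this
  have hGconc : StrictConcaveOn ℝ C G :=
    hGeq ▸ ((∑ i, μ i • L i).toLinearMap.concaveOn hCconv).sub_strictConvexOn hReg
  exact ⟨fun d hd => hmaxG hd,
    fun d hd hdmax => hGconc.eq_of_isMaxOn (fun d' hd' => hdmax d' hd') hmaxG hd hdstarC⟩

/-- Equivalence between regularized fair MORL and regularized linear MORL with the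
optimal implicit preference weights: if `d*` maximizes the regularized welfare objective
`F` over the Bellman-flow feasible set `C`, and `μ*ᵢ = uᵢ'(Jᵢ(d*))`, then `d*` is the
unique maximizer over `C` of the regularized linear objective `G` with weights `μ*`. -/
theorem fairdice_equiv_regularized_linear
    {S A : Type*} [Fintype S] [Fintype A] [Nonempty S] [Nonempty A]
    (T : S → A → S → ℝ) (hT : ∀ s a s', 0 ≤ T s a s')
    (hT1 : ∀ s a, ∑ s', T s a s' = 1)
    (p0 : S → ℝ) (hp0 : ∀ s, 0 ≤ p0 s) (hp01 : ∑ s, p0 s = 1)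
    (γ : ℝ) (hγ0 : 0 ≤ γ) (hγ1 : γ < 1)
    (I : ℕ) (u : Fin I → ℝ → ℝ)
    (hu : ∀ i, ConcaveOn ℝ Set.univ (u i))
    (hud : ∀ i, Differentiable ℝ (u i))
    (f : ℝ → ℝ) (hf : StrictConvexOn ℝ Set.univ f) (hfd : Differentiable ℝ f)
    (β : ℝ) (hβ : 0 < β)
    (dD : S × A → ℝ) (hdD : ∀ sa, 0 < dD sa)
    (r : Fin I → S × A → ℝ)
    (J : Fin I → (S × A → ℝ) → ℝ)
    (hJ : ∀ i d, J i d = ∑ sa : S × A, d sa * r i sa)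
    (C : Set (S × A → ℝ))
    (hC : C = {d | (∀ sa, 0 ≤ d sa) ∧
      ∀ s, ∑ a, d (s, a) =
        (1 - γ) * p0 s + γ * ∑ sa : S × A, T sa.1 sa.2 s * d sa})
    (F : (S × A → ℝ) → ℝ)
    (hF : ∀ d, F d = (∑ i, u i (J i d)) - β * ∑ sa : S × A, dD sa * f (d sa / dD sa))
    (dstar : S × A → ℝ) (hdstarC : dstar ∈ C)
    (hdstarMax : ∀ d ∈ C, F d ≤ F dstar)
    (μ : Fin I → ℝ) (hμ : ∀ i, μ i = deriv (u i) (J i dstar))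
    (G : (S × A → ℝ) → ℝ)
    (hG : ∀ d, G d = (∑ i, μ i * J i d) - β * ∑ sa : S × A, dD sa * f (d sa / dD sa)) :
    (∀ d ∈ C, G d ≤ G dstar) ∧
    (∀ d ∈ C, (∀ d' ∈ C, G d' ≤ G d) → d = dstar) :=
  fairdice_equiv_regularized_linear_general T p0 γ I u hud f hf β hβ dD hdD r J hJ C hC F hF dstar
    hdstarC hdstarMax μ hμ G hG
end

section
/- With preference weights μ₁ = 6/11 and μ₂ = 4/11 (the optimal Lagrange multipliers of the Nash-social-welfare counterexample), the linearly scalarized objective is constant on the simplex: for all d₁, d₂ ∈ ℝ with d₁ + d₂ = 1, one has (6/11)·(d₁ + 3d₂) + (4/11)·(4d₁ + d₂) = 2. Consequently every point of the simplex {(d₁,d₂) : d₁, d₂ ≥ 0, d₁ + d₂ = 1} maximizes the linear scalarization, whereas the Nash-social-welfare problem has the unique maximizer (7/12, 5/12); hence linear MORL with the optimal implicit weights does not recover the unique fair-MORL solution. -/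
/-!
Under the weights `(6/11, 4/11)` both actions have scalarized reward `2`, so the linear objective
is `2 (d₁ + d₂)`, constant on the simplex. On the simplex the Nash product
`(d₁ + 3 d₂)(4 d₁ + d₂)` equals `121/24 - 6 (d₁ - 7/12)²`, and since `log` is strictly
increasing, comparing sums of logarithms is comparing these products.
-/

open Real

theorem log_add_log_le_log_add_log_iff {a b c d : ℝ} (ha : 0 < a) (hb : 0 < b) (hc : 0 < c)
    (hd : 0 < d) : log a + log b ≤ log c + log d ↔ a * b ≤ c * d := by
  rw [← log_mul ha.ne' hb.ne', ← log_mul hc.ne' hd.ne',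
    log_le_log_iff (mul_pos ha hb) (mul_pos hc hd)]

theorem log_add_log_eq_log_add_log_iff {a b c d : ℝ} (ha : 0 < a) (hb : 0 < b) (hc : 0 < c)
    (hd : 0 < d) : log a + log b = log c + log d ↔ a * b = c * d := by
  rw [← log_mul ha.ne' hb.ne', ← log_mul hc.ne' hd.ne',
    log_injOn_pos.eq_iff (mul_pos ha hb) (mul_pos hc hd)]

theorem nash_product_eq_of_add_eq_one {d₁ d₂ : ℝ} (h : d₁ + d₂ = 1) :
    (d₁ + 3 * d₂) * (4 * d₁ + d₂) =
      (7 / 12 + 3 * (5 / 12)) * (4 * (7 / 12) + 5 / 12) - 6 * (d₁ - 7 / 12) ^ 2 := by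
  obtain rfl : d₂ = 1 - d₁ := by linarith
  ring

/-- With the optimal implicit preference weights `μ₁ = 6/11`, `μ₂ = 4/11` of the
Nash-social-welfare counterexample, the linear scalarization is constant (equal to 2)
on the simplex, so every point of the simplex maximizes it, whereas the
Nash-social-welfare problem has the unique maximizer `(7/12, 5/12)`. -/
theorem linear_morl_does_not_recover_fair_morl :
    (∀ d₁ d₂ : ℝ, d₁ + d₂ = 1 →
      (6 / 11) * (d₁ + 3 * d₂) + (4 / 11) * (4 * d₁ + d₂) = 2) ∧
    (∀ d₁ d₂ : ℝ, 0 ≤ d₁ → 0 ≤ d₂ → d₁ + d₂ = 1 →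
      ∀ e₁ e₂ : ℝ, 0 ≤ e₁ → 0 ≤ e₂ → e₁ + e₂ = 1 →
        (6 / 11) * (e₁ + 3 * e₂) + (4 / 11) * (4 * e₁ + e₂) ≤
          (6 / 11) * (d₁ + 3 * d₂) + (4 / 11) * (4 * d₁ + d₂)) ∧
    (∀ d₁ d₂ : ℝ, 0 ≤ d₁ → 0 ≤ d₂ → d₁ + d₂ = 1 →
      (Real.log (d₁ + 3 * d₂) + Real.log (4 * d₁ + d₂) ≤
        Real.log ((7 / 12) + 3 * (5 / 12)) + Real.log (4 * (7 / 12) + (5 / 12))) ∧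
      (Real.log (d₁ + 3 * d₂) + Real.log (4 * d₁ + d₂) =
        Real.log ((7 / 12) + 3 * (5 / 12)) + Real.log (4 * (7 / 12) + (5 / 12)) →
          d₁ = 7 / 12 ∧ d₂ = 5 / 12)) := by
  have linear_eq_two : ∀ d₁ d₂ : ℝ, d₁ + d₂ = 1 →
      (6 / 11) * (d₁ + 3 * d₂) + (4 / 11) * (4 * d₁ + d₂) = 2 :=
    fun d₁ d₂ h => by linear_combination 2 * h
  refine ⟨linear_eq_two, fun d₁ d₂ _ _ hd e₁ e₂ _ _ he => ?_, fun d₁ d₂ h₁ h₂ hd => ?_⟩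
  · rw [linear_eq_two d₁ d₂ hd, linear_eq_two e₁ e₂ he]
  have hA : 0 < d₁ + 3 * d₂ := by linarith
  have hB : 0 < 4 * d₁ + d₂ := by linarith
  rw [log_add_log_le_log_add_log_iff hA hB (by norm_num) (by norm_num),
    log_add_log_eq_log_add_log_iff hA hB (by norm_num) (by norm_num),
    nash_product_eq_of_add_eq_one hd]
  refine ⟨sub_le_self _ (by positivity), fun heq => ?_⟩
  have hsq : (d₁ - 7 / 12) ^ 2 = 0 := by linarith
  have h₁ : d₁ = 7 / 12 := sub_eq_zero.mp (pow_eq_zero_iff two_ne_zero |>.mp hsq)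
  exact ⟨h₁, by linarith⟩
end

section
/- Policy recovery from a feasible stationary distribution: let d : S×A → ℝ satisfy d ≥ 0 and the Bellman flow constraints, and suppose its state marginal ρ(s) = Σ_a d(s,a) is strictly positive for every s. Define the policy π(a|s) = d(s,a)/ρ(s) and the induced state transition matrix P_π(s'|s) = Σ_a π(a|s) T(s'|s,a). Then ρ satisfies ρ(s) = (1−γ) p₀(s) + γ Σ_{s̄} P_π(s|s̄) ρ(s̄) for all s; hence, since this linear system has a unique solution for γ ∈ [0,1), ρ is the discounted state-occupancy of π and d(s,a) = π(a|s)·ρ(s) is the stationary distribution induced by π. -/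
/-! Since `ρ > 0`, the occupancy factors as `d(s,a) = π(a|s) ρ(s)`; substituting this into the
Bellman flow constraint and summing out the action regroups the state–action inflow into the
inflow `Σ_{sb} P_π(s|sb) ρ(sb)` of the induced state chain. -/

open Finset

theorem sum_kernel_mul_policy_mul_eq_sum_induced_kernel_mul
    {R S A : Type*} [CommSemiring R] [Fintype S] [Fintype A]
    (T : S → A → S → R) (π : S → A → R) (ρ : S → R) (s : S) :
    ∑ sa : S × A, T sa.1 sa.2 s * (π sa.1 sa.2 * ρ sa.1) =
      ∑ sb, (∑ a, π sb a * T sb a s) * ρ sb := by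
  rw [Fintype.sum_prod_type]
  refine sum_congr rfl fun sb _ => ?_
  rw [sum_mul]
  exact sum_congr rfl fun a _ => by ring

theorem policy_recovery_from_stationary_distribution_general
    {S A : Type*} [Fintype S] [Fintype A]
    (T : S → A → S → ℝ)
    (p0 : S → ℝ)
    (γ : ℝ)
    (d : S × A → ℝ)
    (hd : ∀ s, ∑ a, d (s, a) =
      (1 - γ) * p0 s + γ * ∑ sa : S × A, T sa.1 sa.2 s * d sa)
    (ρ : S → ℝ) (hρ : ∀ s, ρ s = ∑ a, d (s, a))
    (hρpos : ∀ s, 0 < ρ s)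
    (π : S → A → ℝ) (hπ : ∀ s a, π s a = d (s, a) / ρ s)
    (Pπ : S → S → ℝ) (hPπ : ∀ s s', Pπ s s' = ∑ a, π s a * T s a s') :
    (∀ s, ρ s = (1 - γ) * p0 s + γ * ∑ sb, Pπ sb s * ρ sb) ∧
    (∀ s a, d (s, a) = π s a * ρ s) := by
  have hdπ : ∀ s a, d (s, a) = π s a * ρ s := fun s a => by
    rw [hπ, div_mul_cancel₀ _ (hρpos s).ne']
  have hd_eq : d = fun sa => π sa.1 sa.2 * ρ sa.1 := funext fun sa => hdπ sa.1 sa.2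
  refine ⟨fun s => ?_, hdπ⟩
  calc ρ s = (1 - γ) * p0 s + γ * ∑ sa : S × A, T sa.1 sa.2 s * d sa := (hρ s).trans (hd s)
    _ = (1 - γ) * p0 s + γ * ∑ sb, Pπ sb s * ρ sb := by
      simp only [hPπ, hd_eq, sum_kernel_mul_policy_mul_eq_sum_induced_kernel_mul]

/-- Policy recovery from a feasible stationary distribution: if `d ≥ 0` satisfies the
Bellman flow constraints and its state marginal `ρ(s) = Σ_a d(s,a)` is strictly
positive, then for the extracted policy `π(a|s) = d(s,a)/ρ(s)` and the induced state
transition matrix `P_π(s'|s) = Σ_a π(a|s) T(s'|s,a)`, the marginal `ρ` satisfies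
`ρ(s) = (1−γ) p₀(s) + γ Σ_{sb} P_π(s|sb) ρ(sb)`, i.e. `ρ` is the discounted
state-occupancy of `π` and `d(s,a) = π(a|s)·ρ(s)` is the stationary distribution
induced by `π`. -/
theorem policy_recovery_from_stationary_distribution
    {S A : Type*} [Fintype S] [Fintype A] [Nonempty S] [Nonempty A]
    (T : S → A → S → ℝ) (hT : ∀ s a s', 0 ≤ T s a s')
    (hT1 : ∀ s a, ∑ s', T s a s' = 1)
    (p0 : S → ℝ) (hp0 : ∀ s, 0 ≤ p0 s) (hp01 : ∑ s, p0 s = 1)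
    (γ : ℝ) (hγ0 : 0 ≤ γ) (hγ1 : γ < 1)
    (d : S × A → ℝ) (hd0 : ∀ sa, 0 ≤ d sa)
    (hd : ∀ s, ∑ a, d (s, a) =
      (1 - γ) * p0 s + γ * ∑ sa : S × A, T sa.1 sa.2 s * d sa)
    (ρ : S → ℝ) (hρ : ∀ s, ρ s = ∑ a, d (s, a))
    (hρpos : ∀ s, 0 < ρ s)
    (π : S → A → ℝ) (hπ : ∀ s a, π s a = d (s, a) / ρ s)
    (Pπ : S → S → ℝ) (hPπ : ∀ s s', Pπ s s' = ∑ a, π s a * T s a s') :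
    (∀ s, ρ s = (1 - γ) * p0 s + γ * ∑ sb, Pπ sb s * ρ sb) ∧
    (∀ s a, d (s, a) = π s a * ρ s) :=
  policy_recovery_from_stationary_distribution_general T p0 γ d hd ρ hρ hρpos π hπ Pπ hPπ
end
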